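/- Let P(x₁,…,xₙ,y₁,…,yₙ) = Π_{i=1}^n (x_iⁿ + y_iⁿ) − (Π_{i=1}^n x_i + Π_{i=1}^n y_i)ⁿ. Then P ∈ S_{2n}; equivalently, P(x₁²,…,xₙ²,y₁²,…,yₙ²) is a sum of squares of polynomials in ℝ[x₁,…,xₙ,y₁,…,yₙ] (Minkowski's inequality as a sum of squares). -/

import Mathlib

/-!
Hurwitz's symmetrization argument, which works in any commutative ring for any subsemiring `S`
containing all squares, the `xᵢ` and the `yᵢ`, once `2 · n!` is invertible. For `c : ι → ℕ` let
`M c = ∑_σ ∏ᵢ x_{σ i} ^ c i * y_{σ i} ^ (n - c i)`. Expanding both products,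
`n! ∏ᵢ (xᵢⁿ + yᵢⁿ) = ∑_T M (n • 1_T)` and `n! (∏ᵢ xᵢ + ∏ᵢ yᵢ)ⁿ = ∑_T M (fun _ => #T)`,
so it suffices that `M c - M (fun _ => k)` lies in `S` whenever `∑ᵢ c i = n k`. Repeatedly moving
one unit of exponent from an entry above `k` to an entry below `k` reaches the constant vector,
and pairing `σ` with `σ ∘ (a b)` shows that twice the change of `M` in one move is a sum of
products `(u - v)² · w` with `w ∈ S`.
-/

open Finset MvPolynomial

/-- The Minkowski polynomial in `2n` variables `x₁,…,xₙ,y₁,…,yₙ`. -/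
noncomputable def minkP (n : ℕ) : MvPolynomial (Fin n ⊕ Fin n) ℝ :=
  (∏ i, (X (Sum.inl i) ^ n + X (Sum.inr i) ^ n)) -
    ((∏ i, X (Sum.inl i)) + ∏ i, X (Sum.inr i)) ^ n

namespace Minkowski

open scoped Nat

section transferUnit

variable {ι : Type*}

theorem exists_lt_lt_of_sum_eq [Fintype ι] {c : ι → ℕ} {k : ℕ}
    (hsum : ∑ i, c i = Fintype.card ι * k) (hc : c ≠ fun _ => k) : ∃ a b, k < c a ∧ c b < k := by
  have hsum' : ∑ i, c i = ∑ _i : ι, k := by simp [hsum]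
  obtain ⟨i, hi⟩ := Function.ne_iff.1 hc
  rcases lt_or_gt_of_ne hi with hlt | hgt
  · obtain ⟨a, ha⟩ : ∃ a, k < c a := by
      by_contra! H
      exact (sum_lt_sum (fun j _ => H j) ⟨i, mem_univ i, hlt⟩).ne hsum'
    exact ⟨a, i, ha, hlt⟩
  · obtain ⟨b, hb⟩ : ∃ b, c b < k := by
      by_contra! H
      exact (sum_lt_sum (fun j _ => H j) ⟨i, mem_univ i, hgt⟩).ne' hsum'
    exact ⟨i, b, hgt, hb⟩

variable [DecidableEq ι]

def transferUnit (c : ι → ℕ) (a b : ι) : ι → ℕ :=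
  Function.update (Function.update c a (c a - 1)) b (c b + 1)

variable {c : ι → ℕ} {a b : ι}

theorem transferUnit_left (hab : a ≠ b) : transferUnit c a b a = c a - 1 := by
  simp [transferUnit, hab]

theorem transferUnit_right : transferUnit c a b b = c b + 1 := by
  simp [transferUnit]

theorem transferUnit_of_ne {i : ι} (ha : i ≠ a) (hb : i ≠ b) : transferUnit c a b i = c i := by
  simp [transferUnit, ha, hb]

theorem sum_comp_transferUnit_add [Fintype ι] {M : Type*} [AddCommMonoid M] (f : ℕ → M)
    (hab : a ≠ b) :
    ∑ i, f (transferUnit c a b i) + (f (c a) + f (c b)) =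
      ∑ i, f (c i) + (f (c a - 1) + f (c b + 1)) := by
  have hrest : ∑ i ∈ {a, b}ᶜ, f (transferUnit c a b i) = ∑ i ∈ {a, b}ᶜ, f (c i) :=
    sum_congr rfl fun i hi => by
      rw [mem_compl, mem_insert, mem_singleton, not_or] at hi
      rw [transferUnit_of_ne hi.1 hi.2]
  rw [← sum_add_sum_compl {a, b}, ← sum_add_sum_compl {a, b} (fun i => f (c i)),
    sum_pair hab, sum_pair hab, transferUnit_left hab, transferUnit_right, hrest]
  abel

theorem sum_transferUnit [Fintype ι] (hab : a ≠ b) (ha : 1 ≤ c a) :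
    ∑ i, transferUnit c a b i = ∑ i, c i := by
  have := sum_comp_transferUnit_add (c := c) id hab
  simp only [id] at this
  omega

theorem sum_sq_transferUnit_lt [Fintype ι] (hab : a ≠ b) (hc : c b + 2 ≤ c a) :
    ∑ i, transferUnit c a b i ^ 2 < ∑ i, c i ^ 2 := by
  have := sum_comp_transferUnit_add (c := c) (· ^ 2) hab
  obtain ⟨d, hd⟩ : ∃ d, c a = c b + d + 2 := ⟨c a - c b - 2, by omega⟩
  rw [hd, show c b + d + 2 - 1 = c b + d + 1 by omega] at this
  nlinarith

theorem transferUnit_le {N : ℕ} (hc : c b < c a) (hcN : ∀ i, c i ≤ N) (i : ι) :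
    transferUnit c a b i ≤ N := by
  have := hcN a
  by_cases hia : i = a
  · subst hia; rw [transferUnit_left (by rintro rfl; omega)]; omega
  by_cases hib : i = b
  · subst hib; rw [transferUnit_right]; omega
  rw [transferUnit_of_ne hia hib]; exact hcN i

end transferUnit

section muirheadSum

variable {R : Type*} [CommSemiring R] {ι : Type*} [Fintype ι] [DecidableEq ι]

def pairMonomial (N : ℕ) (x y : ι → R) (c : ι → ℕ) : R :=
  ∏ i, x i ^ c i * y i ^ (N - c i)

def muirheadSum (N : ℕ) (x y : ι → R) (c : ι → ℕ) : R :=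
  ∑ σ : Equiv.Perm ι, pairMonomial N (x ∘ σ) (y ∘ σ) c

theorem pairMonomial_eq_mul_mul {N : ℕ} (x y : ι → R) (c : ι → ℕ) {a b : ι} (hab : a ≠ b) :
    pairMonomial N x y c = x a ^ c a * y a ^ (N - c a) * (x b ^ c b * y b ^ (N - c b)) *
      ∏ i ∈ {a, b}ᶜ, x i ^ c i * y i ^ (N - c i) := by
  rw [pairMonomial, ← prod_mul_prod_compl {a, b}, prod_pair hab]

theorem muirheadSum_const (N : ℕ) (x y : ι → R) (k : ℕ) :
    muirheadSum N x y (fun _ => k) =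
      (Fintype.card ι)! • ((∏ i, x i) ^ k * (∏ i, y i) ^ (N - k)) := by
  have hσ : ∀ σ : Equiv.Perm ι, pairMonomial N (x ∘ σ) (y ∘ σ) (fun _ => k) =
      (∏ i, x i) ^ k * (∏ i, y i) ^ (N - k) := fun σ => by
    simp only [pairMonomial, prod_mul_distrib, prod_pow, Function.comp_apply,
      Equiv.prod_comp σ x, Equiv.prod_comp σ y]
  rw [muirheadSum, sum_congr rfl fun σ _ => hσ σ, sum_const, card_univ, Fintype.card_perm]

theorem sum_muirheadSum_card (x y : ι → R) :
    ∑ T : Finset ι, muirheadSum (Fintype.card ι) x y (fun _ => #T) =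
      (Fintype.card ι)! • (∏ i, x i + ∏ i, y i) ^ Fintype.card ι := by
  simp only [muirheadSum_const, ← smul_sum, Fintype.sum_pow_mul_eq_add_pow]

theorem sum_muirheadSum_indicator (N : ℕ) (x y : ι → R) :
    ∑ T : Finset ι, muirheadSum N x y (fun i => if i ∈ T then N else 0) =
      (Fintype.card ι)! • ∏ i, (x i ^ N + y i ^ N) := by
  have hσ : ∀ σ : Equiv.Perm ι,
      ∑ T : Finset ι, pairMonomial N (x ∘ σ) (y ∘ σ) (fun i => if i ∈ T then N else 0) =
        ∏ i, (x i ^ N + y i ^ N) := fun σ => by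
    rw [← Equiv.prod_comp σ (fun i => x i ^ N + y i ^ N), Fintype.prod_add]
    refine sum_congr rfl fun T _ => ?_
    rw [pairMonomial, ← prod_mul_prod_compl T]
    congr 1 <;> refine prod_congr rfl fun i hi => ?_
    · simp [hi]
    · simp [mem_compl.1 hi]
  simp only [muirheadSum]
  rw [sum_comm, sum_congr rfl fun σ _ => hσ σ, sum_const, card_univ, Fintype.card_perm]

end muirheadSum

variable {R : Type*} [CommRing R] {S : Subsemiring R}

theorem pow_add_pow_sub_mem (hsq : ∀ a : R, a * a ∈ S) {u v : R} (hu : u ∈ S) (hv : v ∈ S)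
    (m : ℕ) : u ^ (m + 2) + v ^ (m + 2) - (u ^ (m + 1) * v + u * v ^ (m + 1)) ∈ S := by
  have hgeom := geom_sum₂_mul u v (m + 1)
  rw [show u ^ (m + 2) + v ^ (m + 2) - (u ^ (m + 1) * v + u * v ^ (m + 1)) =
      (u - v) * (u - v) * ∑ i ∈ range (m + 1), u ^ i * v ^ (m + 1 - 1 - i) by
    linear_combination (v - u) * hgeom]
  exact mul_mem (hsq _) (sum_mem fun i _ => mul_mem (pow_mem hu _) (pow_mem hv _))

theorem mem_of_natCast_mul_mem (hsq : ∀ a : R, a * a ∈ S) {m : ℕ} (hm : IsUnit (m : R))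
    {p : R} (h : m * p ∈ S) : p ∈ S := by
  obtain ⟨r, hr⟩ := hm.exists_left_inv
  have : p = r * r * m * (m * p) := by linear_combination (-(r * m) - 1) * p * hr
  rw [this]
  exact mul_mem (mul_mem (hsq r) (natCast_mem S m)) h

variable {ι : Type*} [Fintype ι] [DecidableEq ι]

/-- After factoring out the part common to the four monomials, the difference is
`u ^ (m + 2) + v ^ (m + 2) - (u ^ (m + 1) * v + u * v ^ (m + 1))` with `u = x a * y b`,
`v = x b * y a` and `c a = c b + m + 2`. -/
theorem pairMonomial_transferUnit_sub_mem (hsq : ∀ a : R, a * a ∈ S) {N : ℕ} {x y : ι → R}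
    (hx : ∀ i, x i ∈ S) (hy : ∀ i, y i ∈ S) {c : ι → ℕ} {a b : ι} (hab : a ≠ b)
    (hc : c b + 2 ≤ c a) (hcN : c a ≤ N) :
    pairMonomial N x y c + pairMonomial N (x ∘ Equiv.swap a b) (y ∘ Equiv.swap a b) c -
      (pairMonomial N x y (transferUnit c a b) +
        pairMonomial N (x ∘ Equiv.swap a b) (y ∘ Equiv.swap a b) (transferUnit c a b)) ∈ S := by
  set A := ∏ i ∈ {a, b}ᶜ, x i ^ c i * y i ^ (N - c i)
  have hrest : ∀ (x' y' : ι → R) (d : ι → ℕ),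
      (∀ i ∈ ({a, b}ᶜ : Finset ι), x' i = x i ∧ y' i = y i ∧ d i = c i) →
      ∏ i ∈ {a, b}ᶜ, x' i ^ d i * y' i ^ (N - d i) = A :=
    fun x' y' d h => prod_congr rfl fun i hi => by rw [(h i hi).1, (h i hi).2.1, (h i hi).2.2]
  have hswap : ∀ i ∈ ({a, b}ᶜ : Finset ι),
      Equiv.swap a b i = i ∧ transferUnit c a b i = c i := fun i hi => by
    rw [mem_compl, mem_insert, mem_singleton, not_or] at hi
    exact ⟨Equiv.swap_apply_of_ne_of_ne hi.1 hi.2, transferUnit_of_ne hi.1 hi.2⟩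
  obtain ⟨m, hm⟩ : ∃ m, c a = c b + m + 2 := ⟨c a - c b - 2, by omega⟩
  obtain ⟨e, he⟩ : ∃ e, N = c a + e := ⟨N - c a, by omega⟩
  rw [pairMonomial_eq_mul_mul _ _ _ hab, pairMonomial_eq_mul_mul _ _ _ hab,
    pairMonomial_eq_mul_mul _ _ _ hab, pairMonomial_eq_mul_mul _ _ _ hab,
    hrest x y c fun _ _ => ⟨rfl, rfl, rfl⟩,
    hrest (x ∘ Equiv.swap a b) (y ∘ Equiv.swap a b) c fun i hi => by simp [hswap i hi],
    hrest x y (transferUnit c a b) fun i hi => by simp [hswap i hi],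
    hrest (x ∘ Equiv.swap a b) (y ∘ Equiv.swap a b) _ fun i hi => by simp [hswap i hi]]
  simp only [Function.comp_apply, Equiv.swap_apply_left, Equiv.swap_apply_right,
    transferUnit_left hab, transferUnit_right]
  rw [show N - c a = e by omega, show N - c b = e + m + 2 by omega,
    show N - (c a - 1) = e + 1 by omega, show N - (c b + 1) = e + m + 1 by omega,
    show c a - 1 = c b + m + 1 by omega, hm]
  set u := x a * y b
  set v := x b * y a
  rw [show x a ^ (c b + m + 2) * y a ^ e * (x b ^ c b * y b ^ (e + m + 2)) * A +
        x b ^ (c b + m + 2) * y b ^ e * (x a ^ c b * y a ^ (e + m + 2)) * A -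
      (x a ^ (c b + m + 1) * y a ^ (e + 1) * (x b ^ (c b + 1) * y b ^ (e + m + 1)) * A +
        x b ^ (c b + m + 1) * y b ^ (e + 1) * (x a ^ (c b + 1) * y a ^ (e + m + 1)) * A) =
      (x a * x b) ^ c b * (y a * y b) ^ e * A *
        (u ^ (m + 2) + v ^ (m + 2) - (u ^ (m + 1) * v + u * v ^ (m + 1))) by ring]
  have hA : A ∈ S := prod_mem fun i _ => mul_mem (pow_mem (hx i) _) (pow_mem (hy i) _)
  exact mul_mem (mul_mem (mul_mem (pow_mem (mul_mem (hx a) (hx b)) _)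
    (pow_mem (mul_mem (hy a) (hy b)) _)) hA)
    (pow_add_pow_sub_mem hsq (mul_mem (hx a) (hy b)) (mul_mem (hx b) (hy a)) m)

theorem two_mul_muirheadSum_sub_transferUnit_mem (hsq : ∀ a : R, a * a ∈ S) {N : ℕ}
    {x y : ι → R} (hx : ∀ i, x i ∈ S) (hy : ∀ i, y i ∈ S) {c : ι → ℕ} {a b : ι} (hab : a ≠ b)
    (hc : c b + 2 ≤ c a) (hcN : c a ≤ N) :
    2 * (muirheadSum N x y c - muirheadSum N x y (transferUnit c a b)) ∈ S := by
  have hreindex : ∀ d, ∑ σ : Equiv.Perm ι,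
      pairMonomial N (x ∘ σ ∘ Equiv.swap a b) (y ∘ σ ∘ Equiv.swap a b) d =
        muirheadSum N x y d :=
    fun d => Equiv.sum_comp (Equiv.mulRight (Equiv.swap a b))
      (fun σ => pairMonomial N (x ∘ σ) (y ∘ σ) d)
  rw [show 2 * (muirheadSum N x y c - muirheadSum N x y (transferUnit c a b)) =
      ∑ σ : Equiv.Perm ι, (pairMonomial N (x ∘ σ) (y ∘ σ) c +
        pairMonomial N (x ∘ σ ∘ Equiv.swap a b) (y ∘ σ ∘ Equiv.swap a b) c -
        (pairMonomial N (x ∘ σ) (y ∘ σ) (transferUnit c a b) +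
          pairMonomial N (x ∘ σ ∘ Equiv.swap a b) (y ∘ σ ∘ Equiv.swap a b)
            (transferUnit c a b))) by
    simp only [sum_sub_distrib, sum_add_distrib, hreindex]
    rw [muirheadSum, muirheadSum]
    ring]
  exact sum_mem fun σ _ =>
    pairMonomial_transferUnit_sub_mem hsq (fun _ => hx _) (fun _ => hy _) hab hc hcN

theorem two_mul_muirheadSum_sub_const_mem (hsq : ∀ a : R, a * a ∈ S) {N : ℕ} {x y : ι → R}
    (hx : ∀ i, x i ∈ S) (hy : ∀ i, y i ∈ S) {k : ℕ} (c : ι → ℕ) (hcN : ∀ i, c i ≤ N)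
    (hsum : ∑ i, c i = Fintype.card ι * k) :
    2 * (muirheadSum N x y c - muirheadSum N x y (fun _ => k)) ∈ S := by
  by_cases hc : c = fun _ => k
  · simp [hc]
  obtain ⟨a, b, ha, hb⟩ := exists_lt_lt_of_sum_eq hsum hc
  have hab : a ≠ b := by rintro rfl; omega
  have hba : c b + 2 ≤ c a := by omega
  have htransfer := two_mul_muirheadSum_sub_const_mem hsq hx hy (k := k) (transferUnit c a b)
    (transferUnit_le (by omega) hcN) (by rw [sum_transferUnit hab (by omega), hsum])
  rw [show 2 * (muirheadSum N x y c - muirheadSum N x y (fun _ => k)) =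
    2 * (muirheadSum N x y c - muirheadSum N x y (transferUnit c a b)) +
      2 * (muirheadSum N x y (transferUnit c a b) - muirheadSum N x y (fun _ => k)) by ring]
  exact add_mem (two_mul_muirheadSum_sub_transferUnit_mem hsq hx hy hab hba (hcN a)) htransfer
termination_by ∑ i, c i ^ 2
decreasing_by exact sum_sq_transferUnit_lt hab hba

theorem prod_pow_add_pow_sub_add_pow_mem (hsq : ∀ a : R, a * a ∈ S) {x y : ι → R}
    (hx : ∀ i, x i ∈ S) (hy : ∀ i, y i ∈ S)
    (hunit : IsUnit ((2 * (Fintype.card ι)! : ℕ) : R)) :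
    ∏ i, (x i ^ Fintype.card ι + y i ^ Fintype.card ι) -
      (∏ i, x i + ∏ i, y i) ^ Fintype.card ι ∈ S := by
  refine mem_of_natCast_mul_mem hsq hunit ?_
  rw [show ((2 * (Fintype.card ι)! : ℕ) : R) *
      (∏ i, (x i ^ Fintype.card ι + y i ^ Fintype.card ι) -
        (∏ i, x i + ∏ i, y i) ^ Fintype.card ι) =
      ∑ T : Finset ι, 2 * (muirheadSum (Fintype.card ι) x y
        (fun i => if i ∈ T then Fintype.card ι else 0) -
        muirheadSum (Fintype.card ι) x y (fun _ => #T)) by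
    rw [← mul_sum, sum_sub_distrib, sum_muirheadSum_indicator, sum_muirheadSum_card,
      nsmul_eq_mul, nsmul_eq_mul]
    push_cast
    ring]
  exact sum_mem fun T _ => two_mul_muirheadSum_sub_const_mem hsq hx hy _
    (fun i => by split_ifs <;> omega) (by simp [sum_ite_mem, mul_comm])

end Minkowski

namespace MvPolynomial

variable (σ K : Type*) [CommRing K]

/-- The semiring `S_{2n}` of the paper (for `σ = Fin n ⊕ Fin n`, `K = ℝ`), in its
characterization by the substitution `X v ↦ X v ^ 2`. -/
noncomputable def sumSqAtSquares : Subsemiring (MvPolynomial σ K) :=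
  (Subsemiring.sumSq (MvPolynomial σ K)).comap (bind₁ fun v => X v ^ 2).toRingHom

variable {σ K}

theorem mem_sumSqAtSquares {p : MvPolynomial σ K} :
    p ∈ sumSqAtSquares σ K ↔ IsSumSq (bind₁ (fun v => (X v : MvPolynomial σ K) ^ 2) p) :=
  Subsemiring.mem_sumSq

theorem mul_self_mem_sumSqAtSquares (p : MvPolynomial σ K) : p * p ∈ sumSqAtSquares σ K := by
  simp [mem_sumSqAtSquares]

theorem X_mem_sumSqAtSquares (v : σ) : X v ∈ sumSqAtSquares σ K := by
  simp [mem_sumSqAtSquares, sq]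

end MvPolynomial

theorem minkowski_sos (n : ℕ) :
    IsSumSq (bind₁ (fun v : Fin n ⊕ Fin n => (X v : MvPolynomial (Fin n ⊕ Fin n) ℝ) ^ 2)
      (minkP n)) := by
  rw [← mem_sumSqAtSquares]
  have h := Minkowski.prod_pow_add_pow_sub_add_pow_mem (ι := Fin n) (S := sumSqAtSquares _ ℝ)
    mul_self_mem_sumSqAtSquares
    (fun i => X_mem_sumSqAtSquares (Sum.inl i)) (fun i => X_mem_sumSqAtSquares (Sum.inr i))
    (by rw [← map_natCast C]; exact (IsUnit.mk0 _ (Nat.cast_ne_zero.2 (by positivity))).map C)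
  rwa [Fintype.card_fin] at h
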